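/- arXiv:1805.08705 — 2 statements merged into one kernel-verified Lean document; each statement's English description precedes it below -/
import Mathlib

section
/- Let g be nonnegative, 1-Lipschitz and nondecreasing in its first argument, and 1-Lipschitz and nonincreasing in its second argument. Let d be a metric on ℝ^r. Then for any h_i, h_j, h_k, c, c' ∈ ℝ^r: g(d(h_i,h_j), d(h_i,h_k)) ≤ g(d(h_i,c), d(h_i,c')) + d(h_j,c) + d(h_k,c'). -/
/-!
Both arguments of `g` are `1`-Lipschitz, so moving `(d(hᵢ,hⱼ), d(hᵢ,hₖ))` to `(d(hᵢ,c), d(hᵢ,c'))`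
changes `g` by at most `|d(hᵢ,hⱼ) - d(hᵢ,c)| + |d(hᵢ,hₖ) - d(hᵢ,c')|`, and by the reverse triangle
inequality these are at most `d(hⱼ,c)` and `d(hₖ,c')`.
-/

theorem lipschitzWith_one_of_abs_sub_le {f : ℝ → ℝ} (h : ∀ x y, x ≤ y → |f y - f x| ≤ y - x) :
    LipschitzWith 1 f :=
  LipschitzWith.mk_one fun x y => by
    rw [Real.dist_eq, Real.dist_eq]
    rcases le_total x y with hxy | hyx
    · rw [abs_sub_comm, abs_sub_comm x, abs_of_nonneg (sub_nonneg.2 hxy)]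
      exact h x y hxy
    · rw [abs_of_nonneg (sub_nonneg.2 hyx)]
      exact h y x hyx

theorem le_add_dist_add_dist_of_lipschitzWith {g : ℝ → ℝ → ℝ}
    (h₁ : ∀ b, LipschitzWith 1 (g · b)) (h₂ : ∀ a, LipschitzWith 1 (g a)) (a b a' b' : ℝ) :
    g a b ≤ g a' b' + dist a a' + dist b b' := by
  have ha := (h₁ b).le_add_mul a a'
  have hb := (h₂ a').le_add_mul b b'
  simp only [NNReal.coe_one, one_mul] at ha hb
  linarith

theorem stmt_2_general (r : ℕ) (g : ℝ → ℝ → ℝ)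
    (hmono1 : ∀ a₁ a₂ b, a₁ ≤ a₂ → 0 ≤ g a₂ b - g a₁ b ∧ g a₂ b - g a₁ b ≤ a₂ - a₁)
    (hmono2 : ∀ a b₁ b₂, b₁ ≤ b₂ → 0 ≤ g a b₁ - g a b₂ ∧ g a b₁ - g a b₂ ≤ b₂ - b₁)
    (hi hj hk c c' : EuclideanSpace ℝ (Fin r)) :
    g (dist hi hj) (dist hi hk) ≤ g (dist hi c) (dist hi c') + dist hj c + dist hk c' := by
  have h₁ (b : ℝ) : LipschitzWith 1 (g · b) :=
    lipschitzWith_one_of_abs_sub_le fun x y hxy => by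
      obtain ⟨hmono, hlip⟩ := hmono1 x y b hxy
      exact abs_le.2 ⟨by linarith, hlip⟩
  have h₂ (a : ℝ) : LipschitzWith 1 (g a) :=
    lipschitzWith_one_of_abs_sub_le fun x y hxy => by
      obtain ⟨hanti, hlip⟩ := hmono2 a x y hxy
      exact abs_le.2 ⟨by linarith, by linarith⟩
  linarith [le_add_dist_add_dist_of_lipschitzWith h₁ h₂ (dist hi hj) (dist hi hk) (dist hi c)
    (dist hi c'), dist_dist_dist_le_right hi hj c, dist_dist_dist_le_right hi hk c']

theorem stmt_2 (r : ℕ) (g : ℝ → ℝ → ℝ)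
    (hnonneg : ∀ a b, 0 ≤ g a b)
    (hmono1 : ∀ a₁ a₂ b, a₁ ≤ a₂ → 0 ≤ g a₂ b - g a₁ b ∧ g a₂ b - g a₁ b ≤ a₂ - a₁)
    (hmono2 : ∀ a b₁ b₂, b₁ ≤ b₂ → 0 ≤ g a b₁ - g a b₂ ∧ g a b₁ - g a b₂ ≤ b₂ - b₁)
    (hi hj hk c c' : EuclideanSpace ℝ (Fin r)) :
    g (dist hi hj) (dist hi hk) ≤ g (dist hi c) (dist hi c') + dist hj c + dist hk c' :=
  stmt_2_general r g hmono1 hmono2 hi hj hk c c'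
end

section
/- Fix a finite index set I of size n, labels y : I → Fin C with each label class of size exactly n/C (assume C divides n), hashcodes h : I → ℝ^r with metric d, centers c : Fin C → ℝ^r, and g as a nonnegative 1-Lipschitz monotone triplet loss. Define L_t = Σ over triples (i,j,k) with y i = y j and y i ≠ y k of g(d(h i, h j), d(h i, h k)), and define l_c(i) = (1/(C−1)) Σ_{l ≠ y i} g(d(h i, c (y i)), d(h i, c l)). Then L_t ≤ (n/C)² (C−1) Σ_i [ l_c(i) + 2 d(h i, c (y i)) ]. -/
/-!
Since `g` is 1-Lipschitz in each argument, the triangle inequality lets us replace `h j` by the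
center `c (y i)` and `h k` by `c (y k)` at the cost of their distances to their own centers:
`g (d(hᵢ, hⱼ), d(hᵢ, hₖ)) ≤ g (d(hᵢ, c_{yᵢ}), d(hᵢ, c_{yₖ})) + d(hⱼ, c_{yⱼ}) + d(hₖ, c_{yₖ})`.
Summed over all triples, balanced classes make each term of the right-hand side occur a fixed
number of times: `g (d(hᵢ, c_{yᵢ}), d(hᵢ, c_l))` exactly `(n/C)²` times for each `l ≠ yᵢ`, and each
`d(hᵢ, c_{yᵢ})` exactly `(n/C)² (C - 1)` times in each of the last two terms.
-/

open Finset

theorem lipschitzWith_one_of_abs_sub_le_s3 {f : ℝ → ℝ}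
    (hf : ∀ a b, a ≤ b → |f b - f a| ≤ b - a) : LipschitzWith 1 f := by
  refine LipschitzWith.of_le_add fun a b => ?_
  rw [Real.dist_eq]
  rcases le_total a b with hab | hab
  · linarith [neg_abs_le (f b - f a), hf a b hab, le_abs_self (a - b), neg_abs_le (a - b)]
  · linarith [le_abs_self (f a - f b), hf b a hab, le_abs_self (a - b)]

theorem le_add_dist_add_dist_of_lipschitzWith_s3 {X : Type*} [PseudoMetricSpace X]
    {g : ℝ → ℝ → ℝ} (hg₁ : ∀ b, LipschitzWith 1 (g · b)) (hg₂ : ∀ a, LipschitzWith 1 (g a))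
    (x p q u v : X) :
    g (dist x p) (dist x q) ≤ g (dist x u) (dist x v) + dist p u + dist q v := by
  have hp : dist (dist x p) (dist x u) ≤ dist p u := by
    simpa only [Real.dist_eq, dist_comm x] using abs_dist_sub_le p u x
  have hq : dist (dist x q) (dist x v) ≤ dist q v := by
    simpa only [Real.dist_eq, dist_comm x] using abs_dist_sub_le q v x
  have h₁ := (hg₁ (dist x q)).le_add_mul (dist x p) (dist x u)
  have h₂ := (hg₂ (dist x u)).le_add_mul (dist x q) (dist x v)
  simp only [NNReal.coe_one, one_mul] at h₁ h₂
  linarith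

section Fibers

variable {I κ M : Type*} [Fintype I] [AddCommMonoid M] {y : I → κ} {m : ℕ}

theorem sum_sum_filter_comm {p : I → I → Prop} [DecidableRel p] (hp : ∀ i j, p i j → p j i)
    (f : I → M) :
    ∑ i, ∑ j ∈ univ.filter (p i), f j = ∑ j, (univ.filter (p j)).card • f j := by
  simp only [sum_filter]
  rw [sum_comm]
  refine sum_congr rfl fun j _ => ?_
  rw [← sum_filter, sum_const]
  congr 2
  exact filter_congr fun i _ => ⟨hp i j, hp j i⟩

theorem sum_filter_ne_comp [Fintype κ] [DecidableEq κ]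
    (hy : ∀ s, (univ.filter (y · = s)).card = m) (s : κ) (F : κ → M) :
    ∑ k ∈ univ.filter (y · ≠ s), F (y k) = m • ∑ l ∈ univ.erase s, F l := by
  rw [← sum_fiberwise_of_maps_to' (t := univ.erase s) (by simp), smul_sum]
  refine sum_congr rfl fun l hl => ?_
  rw [filter_filter, sum_const, ← hy l]
  congr 2
  exact filter_congr fun k _ => ⟨And.right, fun hk => ⟨hk ▸ ne_of_mem_erase hl, hk⟩⟩

theorem card_filter_ne [Fintype κ] [DecidableEq κ]
    (hy : ∀ s, (univ.filter (y · = s)).card = m) (s : κ) :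
    (univ.filter (y · ≠ s)).card = m * (Fintype.card κ - 1) := by
  have := sum_filter_ne_comp hy s (fun _ => 1)
  simpa only [sum_const, smul_eq_mul, mul_one, card_erase_of_mem (mem_univ s), card_univ]
    using this

theorem sum_sum_filter_eq [DecidableEq κ] (hy : ∀ s, (univ.filter (y · = s)).card = m)
    (f : I → M) :
    ∑ i, ∑ j ∈ univ.filter (y · = y i), f j = m • ∑ j, f j := by
  rw [sum_sum_filter_comm (fun i j h => h.symm), smul_sum]
  simp only [hy]

theorem sum_sum_filter_ne [Fintype κ] [DecidableEq κ]
    (hy : ∀ s, (univ.filter (y · = s)).card = m) (f : I → M) :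
    ∑ i, ∑ j ∈ univ.filter (y · ≠ y i), f j = (m * (Fintype.card κ - 1)) • ∑ j, f j := by
  rw [sum_sum_filter_comm (fun i j h => Ne.symm h), smul_sum]
  simp only [card_filter_ne hy]

end Fibers

section Triples

variable {I κ : Type*} [Fintype I] [Fintype κ] [DecidableEq κ] {y : I → κ} {m : ℕ}

theorem sum_triples_eq (hy : ∀ s, (univ.filter (y · = s)).card = m) (F : I → κ → ℝ)
    (D : I → ℝ) :
    ∑ i, ∑ j ∈ univ.filter (y · = y i), ∑ k ∈ univ.filter (y · ≠ y i), (F i (y k) + D j + D k)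
      = (m : ℝ) ^ 2 * ∑ i, ∑ l ∈ univ.erase (y i), F i l
        + 2 * (m : ℝ) ^ 2 * ((Fintype.card κ - 1 : ℕ) : ℝ) * ∑ i, D i := by
  simp only [sum_add_distrib, sum_const, hy, card_filter_ne hy, sum_filter_ne_comp hy,
    nsmul_eq_mul, ← mul_sum, sum_sum_filter_eq hy, sum_sum_filter_ne hy]
  push_cast
  ring

end Triples

theorem stmt_3_general (r n C : ℕ) (hC : 2 ≤ C) (hdvd : C ∣ n)
    (I : Type) [Fintype I]
    (y : I → Fin C)
    (hfiber : ∀ s : Fin C, (Finset.univ.filter (fun i => y i = s)).card = n / C)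
    (h : I → EuclideanSpace ℝ (Fin r)) (c : Fin C → EuclideanSpace ℝ (Fin r))
    (g : ℝ → ℝ → ℝ)
    (hmono1 : ∀ a₁ a₂ b, a₁ ≤ a₂ → 0 ≤ g a₂ b - g a₁ b ∧ g a₂ b - g a₁ b ≤ a₂ - a₁)
    (hmono2 : ∀ a b₁ b₂, b₁ ≤ b₂ → 0 ≤ g a b₁ - g a b₂ ∧ g a b₁ - g a b₂ ≤ b₂ - b₁) :
    ∑ i : I, ∑ j ∈ Finset.univ.filter (fun j => y j = y i),
      ∑ k ∈ Finset.univ.filter (fun k => y k ≠ y i),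
        g (dist (h i) (h j)) (dist (h i) (h k))
    ≤ ((n : ℝ) / C) ^ 2 * (C - 1) *
      ∑ i : I, ((1 / ((C : ℝ) - 1)) *
          (∑ l ∈ Finset.univ.erase (y i), g (dist (h i) (c (y i))) (dist (h i) (c l)))
        + 2 * dist (h i) (c (y i))) := by
  have hg₁ (b : ℝ) : LipschitzWith 1 (g · b) :=
    lipschitzWith_one_of_abs_sub_le_s3 fun a₁ a₂ ha =>
      (abs_of_nonneg (hmono1 a₁ a₂ b ha).1).trans_le (hmono1 a₁ a₂ b ha).2
  have hg₂ (a : ℝ) : LipschitzWith 1 (g a) :=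
    lipschitzWith_one_of_abs_sub_le_s3 fun b₁ b₂ hb => by
      rw [abs_sub_comm]
      exact (abs_of_nonneg (hmono2 a b₁ b₂ hb).1).trans_le (hmono2 a b₁ b₂ hb).2
  have hm : ((n / C : ℕ) : ℝ) = n / C := Nat.cast_div hdvd (Nat.cast_ne_zero.2 (by omega))
  have hC₁ : ((C - 1 : ℕ) : ℝ) = C - 1 := by rw [Nat.cast_sub (by omega), Nat.cast_one]
  have hC₁_ne : (C : ℝ) - 1 ≠ 0 := sub_ne_zero.2 (by exact_mod_cast (by omega : C ≠ 1))
  calc _ ≤ ∑ i : I, ∑ j ∈ univ.filter (fun j => y j = y i),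
          ∑ k ∈ univ.filter (fun k => y k ≠ y i),
            (g (dist (h i) (c (y i))) (dist (h i) (c (y k))) + dist (h j) (c (y j))
              + dist (h k) (c (y k))) := by
        gcongr with i _ j hj
        rw [(mem_filter.1 hj).2]
        exact le_add_dist_add_dist_of_lipschitzWith_s3 hg₁ hg₂ _ _ _ _ _
    _ = _ := sum_triples_eq hfiber (fun i l => g (dist (h i) (c (y i))) (dist (h i) (c l)))
          (fun j => dist (h j) (c (y j)))
    _ = _ := by
      rw [Fintype.card_fin, hm, hC₁, sum_add_distrib, ← mul_sum, ← mul_sum]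
      field_simp

theorem stmt_3 (r n C : ℕ) (hC : 2 ≤ C) (hdvd : C ∣ n)
    (I : Type) [Fintype I] (hcard : Fintype.card I = n)
    (y : I → Fin C)
    (hfiber : ∀ s : Fin C, (Finset.univ.filter (fun i => y i = s)).card = n / C)
    (h : I → EuclideanSpace ℝ (Fin r)) (c : Fin C → EuclideanSpace ℝ (Fin r))
    (g : ℝ → ℝ → ℝ)
    (hnonneg : ∀ a b, 0 ≤ g a b)
    (hmono1 : ∀ a₁ a₂ b, a₁ ≤ a₂ → 0 ≤ g a₂ b - g a₁ b ∧ g a₂ b - g a₁ b ≤ a₂ - a₁)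
    (hmono2 : ∀ a b₁ b₂, b₁ ≤ b₂ → 0 ≤ g a b₁ - g a b₂ ∧ g a b₁ - g a b₂ ≤ b₂ - b₁) :
    ∑ i : I, ∑ j ∈ Finset.univ.filter (fun j => y j = y i),
      ∑ k ∈ Finset.univ.filter (fun k => y k ≠ y i),
        g (dist (h i) (h j)) (dist (h i) (h k))
    ≤ ((n : ℝ) / C) ^ 2 * (C - 1) *
      ∑ i : I, ((1 / ((C : ℝ) - 1)) *
          (∑ l ∈ Finset.univ.erase (y i), g (dist (h i) (c (y i))) (dist (h i) (c l)))
        + 2 * dist (h i) (c (y i))) :=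
  stmt_3_general r n C hC hdvd I y hfiber h c g hmono1 hmono2
end
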